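/- For every γ ≥ 1/4 it holds that h(γ) ≤ 0, where h(γ) = (2γ²+4γ+1)/(2(1+γ)(γ²+2γ)) + 1 − (γ²+2γ)/ln(1+γ). -/

import Mathlib

/-- h(γ) = (2γ²+4γ+1)/(2(1+γ)(γ²+2γ)) + 1 − (γ²+2γ)/ln(1+γ). -/
noncomputable def hfun (γ : ℝ) : ℝ :=
  (2 * γ ^ 2 + 4 * γ + 1) / (2 * (1 + γ) * (γ ^ 2 + 2 * γ)) + 1 -
    (γ ^ 2 + 2 * γ) / Real.log (1 + γ)

/-!
Since `hfun` is increasing in the value of `log (1 + γ)`, it suffices to replace the logarithm by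
an upper bound and check a rational inequality. For `γ ≥ 1` the crude bound `log (1 + γ) ≤ γ`
suffices; on `[1/4, 1]` the Taylor bound `log (1 + γ) ≤ γ - γ²/2 + γ³/3` does, though only
barely at `γ = 1/4` (margin about `5 · 10⁻⁴`).
-/

open Real

/-- The derivative of the difference is `t³ / (1 + t) ≥ 0`. -/
lemma Real.log_one_add_le_cubic {x : ℝ} (hx : 0 ≤ x) :
    log (1 + x) ≤ x - x ^ 2 / 2 + x ^ 3 / 3 := by
  let f : ℝ → ℝ := fun t => t - t ^ 2 / 2 + t ^ 3 / 3 - log (1 + t)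
  have hderiv : ∀ t, 0 ≤ t → HasDerivAt f (1 - t + t ^ 2 - 1 / (1 + t)) t := fun t ht => by
    have hlog := ((hasDerivAt_id t).const_add 1).log (by simp; linarith)
    have hpoly := ((hasDerivAt_id t).sub ((hasDerivAt_pow 2 t).div_const 2)).add
      ((hasDerivAt_pow 3 t).div_const 3)
    refine (hpoly.sub hlog).congr_deriv ?_
    simp only [id, Nat.cast_ofNat]
    ring
  have hmono : MonotoneOn f (Set.Ici 0) := by
    refine monotoneOn_of_hasDerivWithinAt_nonneg (convex_Ici 0)
      (fun t ht => (hderiv t ht).continuousAt.continuousWithinAt)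
      (fun t ht => (hderiv t (interior_subset ht)).hasDerivWithinAt) fun t ht => ?_
    rw [interior_Ici, Set.mem_Ioi] at ht
    have h1t : 0 < 1 + t := by linarith
    rw [sub_nonneg, div_le_iff₀ h1t]
    nlinarith [pow_pos ht 3]
  have := hmono Set.self_mem_Ici hx hx
  norm_num [f] at this
  linarith

lemma hfun_le_of_log_le {γ L : ℝ} (hγ : 0 < γ) (hL : log (1 + γ) ≤ L) :
    hfun γ ≤ (2 * γ ^ 2 + 4 * γ + 1) / (2 * (1 + γ) * (γ ^ 2 + 2 * γ)) + 1 -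
      (γ ^ 2 + 2 * γ) / L := by
  have hlog : 0 < log (1 + γ) := log_pos (by linarith)
  unfold hfun
  gcongr

lemma hfun_nonpos_of_le_one {γ : ℝ} (hγ : 1 / 4 ≤ γ) (hγ1 : γ ≤ 1) : hfun γ ≤ 0 := by
  have hγ0 : 0 < γ := by linarith
  have hD : 0 < 2 * (1 + γ) * (γ ^ 2 + 2 * γ) := by positivity
  have hP : 0 < γ - γ ^ 2 / 2 + γ ^ 3 / 3 := by nlinarith
  refine (hfun_le_of_log_le hγ0 (log_one_add_le_cubic hγ0.le)).trans ?_
  rw [sub_nonpos, div_add' _ _ _ hD.ne', div_le_div_iff₀ hD hP]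
  have ha : 0 ≤ γ - 1 / 4 := by linarith
  have hb : 0 ≤ 1 - γ := by linarith
  nlinarith [pow_nonneg ha 2, pow_nonneg ha 3, pow_nonneg ha 4, mul_nonneg (pow_nonneg ha 4) hb,
    mul_nonneg (mul_nonneg (pow_nonneg ha 4) hb) (by linarith : (0 : ℝ) ≤ γ + 1 / 2)]

lemma hfun_nonpos_of_one_le {γ : ℝ} (hγ : 1 ≤ γ) : hfun γ ≤ 0 := by
  have hγ0 : 0 < γ := by linarith
  have hD : 0 < 2 * (1 + γ) * (γ ^ 2 + 2 * γ) := by positivity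
  have hlog : log (1 + γ) ≤ γ := by linarith [log_le_sub_one_of_pos (by linarith : 0 < 1 + γ)]
  refine (hfun_le_of_log_le hγ0 hlog).trans ?_
  have hq : (γ ^ 2 + 2 * γ) / γ = γ + 2 := by field_simp
  have hA : (2 * γ ^ 2 + 4 * γ + 1) / (2 * (1 + γ) * (γ ^ 2 + 2 * γ)) ≤ 1 := by
    rw [div_le_one hD]
    nlinarith
  linarith

/-- For every γ ≥ 1/4 it holds that h(γ) ≤ 0. -/
theorem stmt_6 : ∀ γ : ℝ, 1 / 4 ≤ γ → hfun γ ≤ 0 := fun γ hγ =>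
  (le_total γ 1).elim (hfun_nonpos_of_le_one hγ) hfun_nonpos_of_one_le
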